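/- arXiv:2403.12012 — 5 statements merged into one kernel-verified Lean document; each statement's English description precedes it below -/
import Mathlib

section
/- For all real \(x \in (-2\pi, 2\pi)\), the real part of \(p(ix) = \frac{ix}{1 - e^{-ix}}\) satisfies \(\Re[p(ix)] = \frac{x \sin x}{2(1-\cos x)} \le 1\) (interpreting the value at \(x=0\) as \(1\) by continuity). -/
open Real

lemma key_aux {t : ℝ} (h0 : 0 < t) (h2 : t < π) : t * Real.cos t ≤ Real.sin t := by
  rcases lt_or_ge t (π / 2) with h | h
  · have hc : 0 < Real.cos t := Real.cos_pos_of_mem_Ioo ⟨by linarith [Real.pi_pos], h⟩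
    have ht := Real.lt_tan h0 h
    rw [Real.tan_eq_sin_div_cos] at ht
    have := (lt_div_iff₀ hc).mp ht
    linarith
  · have hc : Real.cos t ≤ 0 := Real.cos_nonpos_of_pi_div_two_le_of_le h (by linarith [Real.pi_pos])
    have hs : 0 < Real.sin t := Real.sin_pos_of_pos_of_lt_pi h0 h2
    nlinarith

lemma key_ineq {x : ℝ} (h0 : 0 < x) (h2 : x < 2 * π) :
    x * Real.sin x ≤ 2 * (1 - Real.cos x) := by
  set t := x / 2 with ht
  have ht0 : 0 < t := by positivity
  have htπ : t < π := by simp only [ht]; linarith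
  have hsin : Real.sin x = 2 * Real.sin t * Real.cos t := by
    rw [show x = 2 * t by simp [ht]; ring, Real.sin_two_mul]
  have hcos : Real.cos x = 2 * Real.cos t ^ 2 - 1 := by
    rw [show x = 2 * t by simp [ht]; ring, Real.cos_two_mul]
  have hpyth := Real.sin_sq_add_cos_sq t
  have hkey := key_aux ht0 htπ
  have hs : 0 < Real.sin t := Real.sin_pos_of_pos_of_lt_pi ht0 htπ
  have hx : x = 2 * t := by simp [ht]; ring
  rw [hsin, hcos, hx]
  nlinarith [mul_le_mul_of_nonneg_left hkey (le_of_lt hs)]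

lemma key_ineq' {x : ℝ} (hx1 : -(2 * π) < x) (hx2 : x < 2 * π) :
    x * Real.sin x ≤ 2 * (1 - Real.cos x) := by
  rcases lt_trichotomy x 0 with h | h | h
  · have := key_ineq (x := -x) (by linarith) (by linarith)
    simpa using this
  · simp [h]
  · exact key_ineq h hx2

/-- For `x ∈ (-2π, 2π)`, the real part of `p(ix) = ix/(1 - e^{-ix})` equals
`x sin x / (2(1 - cos x))` for `x ≠ 0`, and is at most `1` (with value `1` at `x = 0`). -/
theorem stmt1 (x : ℝ) (hx : x ∈ Set.Ioo (-(2 * Real.pi)) (2 * Real.pi)) :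
    (x ≠ 0 → ((Complex.I * x) / (1 - Complex.exp (-(Complex.I * x)))).re
        = x * Real.sin x / (2 * (1 - Real.cos x))) ∧
    (if x = 0 then (1 : ℝ)
      else ((Complex.I * x) / (1 - Complex.exp (-(Complex.I * x)))).re) ≤ 1 := by
  obtain ⟨hx1, hx2⟩ := hx
  have hexp : Complex.exp (-(Complex.I * x)) =
      Complex.ofReal (Real.cos x) - Complex.ofReal (Real.sin x) * Complex.I := by
    rw [show -(Complex.I * (x : ℂ)) = ((-x : ℝ) : ℂ) * Complex.I by push_cast; ring,
      Complex.exp_mul_I]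
    push_cast
    rw [Complex.cos_neg, Complex.sin_neg, ← Complex.ofReal_cos, ← Complex.ofReal_sin]
    ring
  have hre : ∀ _ : x ≠ 0, ((Complex.I * x) / (1 - Complex.exp (-(Complex.I * x)))).re
      = x * Real.sin x / (2 * (1 - Real.cos x)) := by
    intro hx0
    rw [hexp, Complex.div_re]
    have h1 : (Complex.I * (x:ℂ)).re = 0 := by simp
    have h2 : (Complex.I * (x:ℂ)).im = x := by simp
    have h3 : ((1 : ℂ) - (Complex.ofReal (Real.cos x) - Complex.ofReal (Real.sin x) * Complex.I)).re = 1 - Real.cos x := by simp [Complex.cos_ofReal_re]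
    have h4 : ((1 : ℂ) - (Complex.ofReal (Real.cos x) - Complex.ofReal (Real.sin x) * Complex.I)).im = Real.sin x := by simp [Complex.sin_ofReal_re]
    have h5 : Complex.normSq ((1 : ℂ) - (Complex.ofReal (Real.cos x) - Complex.ofReal (Real.sin x) * Complex.I)) = 2 * (1 - Real.cos x) := by
      rw [Complex.normSq_apply, h3, h4]
      nlinarith [Real.sin_sq_add_cos_sq x]
    rw [h1, h2, h3, h4, h5]
    ring
  refine ⟨hre, ?_⟩
  by_cases hx0 : x = 0
  · simp [hx0]
  · rw [if_neg hx0, hre hx0]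
    have hcos : Real.cos x < 1 := by
      rcases lt_or_eq_of_le (Real.cos_le_one x) with h | h
      · exact h
      · exact absurd ((Real.cos_eq_one_iff_of_lt_of_lt hx1 hx2).mp h) hx0
    have hden : 0 < 2 * (1 - Real.cos x) := by linarith
    rw [div_le_one hden]
    exact key_ineq' hx1 hx2
end

section
/- Let \(A\) be a skew-adjoint linear operator on a finite-dimensional real inner product space \(V\) such that the operator \(P := \sum_{k=0}^\infty \frac{B_k(1)}{k!} A^k\) (the power series of \(p(z)=z/(1-e^{-z})\) applied to \(A\)) converges. Then for every vector \(v \in V\), \(\langle P v, v\rangle \le \|v\|^2\). -/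
open scoped RealInnerProductSpace

/-- Sign of even Bernoulli numbers: `(-1)^(m+1) * B_{2m} ≥ 0`. -/
lemma aux_bernoulli_sign (m : ℕ) (hm : m ≠ 0) :
    0 ≤ (-1 : ℝ) ^ (m + 1) * (bernoulli (2 * m) : ℝ) := by
  have hS := (hasSum_zeta_nat hm).nonneg (fun n => by positivity)
  have hc : (0 : ℝ) < (2 : ℝ) ^ (2 * m - 1) * Real.pi ^ (2 * m) / ((2 * m).factorial : ℝ) := by
    have := Real.pi_pos
    positivity
  have hrw : (-1 : ℝ) ^ (m + 1) * (2 : ℝ) ^ (2 * m - 1) * Real.pi ^ (2 * m) *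
      (bernoulli (2 * m) : ℝ) / ((2 * m).factorial : ℝ)
      = ((2 : ℝ) ^ (2 * m - 1) * Real.pi ^ (2 * m) / ((2 * m).factorial : ℝ)) *
        ((-1 : ℝ) ^ (m + 1) * (bernoulli (2 * m) : ℝ)) := by
    ring
  rw [hrw] at hS
  exact nonneg_of_mul_nonneg_right hS hc

/-- If `A` is a skew-adjoint operator on a finite-dimensional real inner product
space and the power series `P = ∑ B_k(1)/k! A^k` of `p(z) = z/(1-e^{-z})` converges,
then `⟪P v, v⟫ ≤ ‖v‖²` for every `v`. -/
theorem stmt3 {V : Type*} [NormedAddCommGroup V] [InnerProductSpace ℝ V]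
    [FiniteDimensional ℝ V]
    (A : V →L[ℝ] V)
    (hskew : ∀ v w : V, ⟪A v, w⟫ = -⟪v, A w⟫)
    (hsum : Summable (fun k : ℕ => ((bernoulli' k : ℝ) / (k.factorial : ℝ)) • A ^ k))
    (v : V) :
    ⟪(∑' k : ℕ, ((bernoulli' k : ℝ) / (k.factorial : ℝ)) • A ^ k) v, v⟫ ≤ ‖v‖ ^ 2 := by
  -- moving powers of `A` across the inner product
  have key : ∀ (n : ℕ) (w u : V), ⟪(A ^ n) w, u⟫ = (-1 : ℝ) ^ n * ⟪w, (A ^ n) u⟫ := by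
    intro n
    induction n with
    | zero => intro w u; simp
    | succ n ih =>
      intro w u
      have h1 : (A ^ (n + 1)) w = (A ^ n) (A w) := by
        rw [pow_succ]; rfl
      have h2 : A ((A ^ n) u) = (A ^ (n + 1)) u := by
        rw [pow_succ']; rfl
      rw [h1, ih (A w) u, hskew w ((A ^ n) u), h2]
      ring
  -- the scalar series
  set c : ℕ → ℝ := fun k => (bernoulli' k : ℝ) / (k.factorial : ℝ) with hc
  set P : V →L[ℝ] V := ∑' k : ℕ, c k • A ^ k with hP
  have hΦ' : HasSum (fun k : ℕ => c k * ⟪v, (A ^ k) v⟫) ⟪v, P v⟫ := by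
    have := ((innerSL ℝ v).comp (ContinuousLinearMap.apply ℝ V v)).hasSum hsum.hasSum
    rw [hc, hP]
    simpa using this
  -- each term with index ≥ 1 is nonpositive
  have hterm : ∀ k : ℕ, c (k + 1) * ⟪v, (A ^ (k + 1)) v⟫ ≤ 0 := by
    intro k
    rcases Nat.even_or_odd (k + 1) with he | ho
    · -- even case: k + 1 = 2 * m, m ≥ 1
      obtain ⟨m, hm⟩ := he
      have hm2 : k + 1 = 2 * m := by omega
      have hm0 : m ≠ 0 := by omega
      -- ⟪v, A^{2m} v⟫ = (-1)^m * ‖A^m v‖²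
      have hsplit : (A ^ (2 * m)) v = (A ^ m) ((A ^ m) v) := by
        rw [two_mul, pow_add]; rfl
      have hinner : ⟪v, (A ^ (2 * m)) v⟫ = (-1 : ℝ) ^ m * ⟪(A ^ m) v, (A ^ m) v⟫ := by
        rw [real_inner_comm, hsplit, key m ((A ^ m) v) v, real_inner_comm]
      have hb : (bernoulli' (2 * m) : ℝ) = (bernoulli (2 * m) : ℝ) := by
        rw [bernoulli_eq_bernoulli'_of_ne_one (by omega)]
      have hsign : (-1 : ℝ) ^ m * (bernoulli' (2 * m) : ℝ) ≤ 0 := by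
        have h := aux_bernoulli_sign m hm0
        rw [hb]
        have : (-1 : ℝ) ^ m * (bernoulli (2 * m) : ℝ)
            = -((-1 : ℝ) ^ (m + 1) * (bernoulli (2 * m) : ℝ)) := by
          rw [pow_succ]; ring
        rw [this]
        linarith
      rw [hm2, hinner, hc]
      have hfac : (0 : ℝ) < ((2 * m).factorial : ℝ) := by
        exact_mod_cast Nat.factorial_pos _
      have := real_inner_self_nonneg (x := (A ^ m) v)
      have hrw : (bernoulli' (2 * m) : ℝ) / ((2 * m).factorial : ℝ) *
          ((-1 : ℝ) ^ m * ⟪(A ^ m) v, (A ^ m) v⟫)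
          = ((-1 : ℝ) ^ m * (bernoulli' (2 * m) : ℝ)) / ((2 * m).factorial : ℝ) *
            ⟪(A ^ m) v, (A ^ m) v⟫ := by
        ring
      rw [hrw]
      exact mul_nonpos_of_nonpos_of_nonneg (div_nonpos_of_nonpos_of_nonneg hsign hfac.le) this
    · -- odd case: the inner product vanishes
      have h0 : ⟪v, (A ^ (k + 1)) v⟫ = 0 := by
        have h1 := key (k + 1) v v
        rw [Odd.neg_one_pow ho] at h1
        have h2 := real_inner_comm ((A ^ (k + 1)) v) v
        linarith [h1, h2]
      rw [h0, mul_zero]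
  -- assemble
  have hzero : c 0 * ⟪v, (A ^ 0) v⟫ = ‖v‖ ^ 2 := by
    simp [hc, real_inner_self_eq_norm_sq]
  have hcomm : ⟪P v, v⟫ = ⟪v, P v⟫ := real_inner_comm _ _
  rw [hcomm, ← hΦ'.tsum_eq, Summable.tsum_eq_zero_add hΦ'.summable, hzero]
  have : (∑' k : ℕ, c (k + 1) * ⟪v, (A ^ (k + 1)) v⟫) ≤ 0 :=
    tsum_nonpos hterm
  linarith
end

section
/- Let \(f: [0,\infty) \to [0,\infty)\) be continuous, non-decreasing, concave, with \(f(0)=0\), constant on \([R,\infty)\), and \(f(R) > 0\). Let \(\alpha, \beta, \gamma, D > 0\). Define for \((g,\xi), (\hat g, \hat\xi)\) in a metric space of diameter \(\le D\) times an inner product space: \(r = \alpha d(g,\hat g) + \|z + \gamma^{-1}(\xi - \hat\xi)\|\) where \(z\) is a vector with \(\|z\| = d(g,\hat g)\), and \(\rho = f(r)(1 + \beta\|\xi-\hat\xi\|^2)\). Then there exists an explicit constant \(C_\rho > 0\), namely \(C_\rho = \min\{\frac{\beta}{2} f(2\min\{\alpha,1\}\gamma^{-1}D),\ \frac{f((\alpha+1+2\gamma^{-1})D)}{(\alpha+1+\gamma^{-1})^2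 D^2}\min\{\frac{\alpha^2}{4}, \frac{1}{\gamma^2}, \frac{\alpha^2}{4\gamma^2}\}\}\), such that \(C_\rho (d(g,\hat g)^2 + \|\xi - \hat\xi\|^2) \le \rho\). -/
set_option maxHeartbeats 1600000


/-- Control of the squared product distance by the semi-distance `ρ`:
with the explicit constant `C_ρ`, one has `C_ρ (d(g,gh)² + ‖ξ-ξ̂‖²) ≤ ρ`. -/
theorem stmt7 {G : Type*} [MetricSpace G]
    {V : Type*} [NormedAddCommGroup V] [InnerProductSpace ℝ V]
    (α β γ D R : ℝ) (hα : 0 < α) (hβ : 0 < β) (hγ : 0 < γ) (hD : 0 < D) (hR : 0 < R)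
    (hdiam : ∀ g gh : G, dist g gh ≤ D)
    (f : ℝ → ℝ) (hfc : Continuous f) (hfmono : Monotone f)
    (hfconc : ConcaveOn ℝ (Set.Ici 0) f) (hf0 : f 0 = 0)
    (hfconst : ∀ r : ℝ, R ≤ r → f r = f R) (hfR : 0 < f R) :
    ∀ (g gh : G) (ξ ξh z : V), ‖z‖ = dist g gh →
      min (β / 2 * f (2 * min α 1 * γ⁻¹ * D))
          (f ((α + 1 + 2 * γ⁻¹) * D) / ((α + 1 + γ⁻¹) ^ 2 * D ^ 2)
            * min (α ^ 2 / 4) (min (1 / γ ^ 2) (α ^ 2 / (4 * γ ^ 2))))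
        * (dist g gh ^ 2 + ‖ξ - ξh‖ ^ 2)
      ≤ f (α * dist g gh + ‖z + γ⁻¹ • (ξ - ξh)‖) * (1 + β * ‖ξ - ξh‖ ^ 2) := by
  intro g gh ξ ξh z hz
  have hγi : (0:ℝ) < γ⁻¹ := inv_pos.mpr hγ
  set d := dist g gh with hdd
  set s := ‖ξ - ξh‖ with hss
  set u := ‖z + γ⁻¹ • (ξ - ξh)‖ with huu
  have hd0 : 0 ≤ d := dist_nonneg
  have hdD : d ≤ D := hdiam g gh
  have hs0 : 0 ≤ s := norm_nonneg _
  have hu0 : 0 ≤ u := norm_nonneg _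
  -- triangle inequalities
  have hus : γ⁻¹ * s ≤ d + u := by
    have h2 : ‖γ⁻¹ • (ξ - ξh)‖ ≤ ‖z + γ⁻¹ • (ξ - ξh)‖ + ‖z‖ := by
      have he := norm_sub_le (z + γ⁻¹ • (ξ - ξh)) z
      rw [add_sub_cancel_left] at he
      exact he
    rw [norm_smul, Real.norm_eq_abs, abs_of_pos hγi, hz] at h2
    linarith
  have huds : u ≤ d + γ⁻¹ * s := by
    have h2 : ‖z + γ⁻¹ • (ξ - ξh)‖ ≤ ‖z‖ + ‖γ⁻¹ • (ξ - ξh)‖ := norm_add_le _ _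
    rw [norm_smul, Real.norm_eq_abs, abs_of_pos hγi, hz] at h2
    linarith
  -- nonnegativity of f
  have hfnn : ∀ x : ℝ, 0 ≤ x → 0 ≤ f x := by
    intro x hx
    calc (0:ℝ) = f 0 := hf0.symm
    _ ≤ f x := hfmono hx
  have hr0 : 0 ≤ α * d + u := by nlinarith
  have hfrnn : 0 ≤ f (α * d + u) := hfnn _ hr0
  -- concavity lemma
  have hconc' : ∀ M x : ℝ, 0 < M → 0 ≤ x → x ≤ M → x * f M ≤ M * f x := by
    intro M x hM hx hxM
    have ha : 0 ≤ 1 - x / M := by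
      rw [sub_nonneg]; exact (div_le_one hM).mpr hxM
    have hb : 0 ≤ x / M := div_nonneg hx hM.le
    have h := hfconc.2 (Set.mem_Ici.mpr (le_refl (0:ℝ))) (Set.mem_Ici.mpr hM.le) ha hb
      (by ring)
    have hxM' : (1 - x / M) • (0:ℝ) + (x / M) • M = x := by
      simp only [smul_eq_mul]; field_simp; ring
    rw [hxM'] at h
    rw [smul_eq_mul, smul_eq_mul, hf0, mul_zero, zero_add] at h
    calc x * f M = (x / M * f M) * M := by field_simp
    _ ≤ f x * M := mul_le_mul_of_nonneg_right h hM.le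
    _ = M * f x := mul_comm _ _
  rcases le_or_gt (2 * D) s with hcase | hcase
  · -- Case 1 : s ≥ 2D
    have hmα : (0:ℝ) < min α 1 := lt_min hα one_pos
    have hM1pos : 0 < 2 * min α 1 * γ⁻¹ * D := by positivity
    have hfM1nn : 0 ≤ f (2 * min α 1 * γ⁻¹ * D) := hfnn _ hM1pos.le
    -- r ≥ min α 1 * γ⁻¹ * s ≥ 2 min α 1 γ⁻¹ D
    have hr1 : min α 1 * γ⁻¹ * s ≤ α * d + u := by
      have hma : min α 1 ≤ α := min_le_left _ _
      have hm1 : min α 1 ≤ 1 := min_le_right _ _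
      nlinarith [mul_le_mul_of_nonneg_left hus hmα.le,
        mul_le_mul_of_nonneg_right hma hd0, mul_le_mul_of_nonneg_right hm1 hu0]
    have hrM1 : 2 * min α 1 * γ⁻¹ * D ≤ α * d + u := by
      have : 2 * min α 1 * γ⁻¹ * D ≤ min α 1 * γ⁻¹ * s := by nlinarith
      linarith
    have hf1 : f (2 * min α 1 * γ⁻¹ * D) ≤ f (α * d + u) := hfmono hrM1
    have hds : d ^ 2 + s ^ 2 ≤ 2 * s ^ 2 := by nlinarith
    have hminle : min (β / 2 * f (2 * min α 1 * γ⁻¹ * D))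
          (f ((α + 1 + 2 * γ⁻¹) * D) / ((α + 1 + γ⁻¹) ^ 2 * D ^ 2)
            * min (α ^ 2 / 4) (min (1 / γ ^ 2) (α ^ 2 / (4 * γ ^ 2))))
        ≤ β / 2 * f (2 * min α 1 * γ⁻¹ * D) := min_le_left _ _
    have hminnn : 0 ≤ min (β / 2 * f (2 * min α 1 * γ⁻¹ * D))
          (f ((α + 1 + 2 * γ⁻¹) * D) / ((α + 1 + γ⁻¹) ^ 2 * D ^ 2)
            * min (α ^ 2 / 4) (min (1 / γ ^ 2) (α ^ 2 / (4 * γ ^ 2)))) := by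
      apply le_min
      · positivity
      · have hM2pos : 0 < (α + 1 + 2 * γ⁻¹) * D := by
          apply mul_pos _ hD; linarith
        have := hfnn _ hM2pos.le
        have h1 : (0:ℝ) < (α + 1 + γ⁻¹) ^ 2 * D ^ 2 := by positivity
        positivity
    calc min (β / 2 * f (2 * min α 1 * γ⁻¹ * D))
          (f ((α + 1 + 2 * γ⁻¹) * D) / ((α + 1 + γ⁻¹) ^ 2 * D ^ 2)
            * min (α ^ 2 / 4) (min (1 / γ ^ 2) (α ^ 2 / (4 * γ ^ 2))))
        * (d ^ 2 + s ^ 2)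
        ≤ β / 2 * f (2 * min α 1 * γ⁻¹ * D) * (2 * s ^ 2) := by
          apply mul_le_mul hminle hds (by positivity) (by positivity)
    _ = f (2 * min α 1 * γ⁻¹ * D) * (β * s ^ 2) := by ring
    _ ≤ f (α * d + u) * (β * s ^ 2) := by
          apply mul_le_mul_of_nonneg_right hf1 (by positivity)
    _ ≤ f (α * d + u) * (1 + β * s ^ 2) := by
          have hb : β * s ^ 2 ≤ 1 + β * s ^ 2 := by linarith
          exact mul_le_mul_of_nonneg_left hb hfrnn
  · -- Case 2 : s < 2D
    set m := min (α / 2) (min γ⁻¹ (α * γ⁻¹ / 2)) with hmm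
    have hm0 : 0 < m := lt_min (by positivity) (lt_min hγi (by positivity))
    have hmα2 : m ≤ α / 2 := min_le_left _ _
    set M₂ := (α + 1 + 2 * γ⁻¹) * D with hM₂d
    set K2 := (α + 1 + γ⁻¹) ^ 2 * D ^ 2 with hK2d
    have hM₂pos : 0 < M₂ := by apply mul_pos _ hD; linarith
    have hK2pos : 0 < K2 := by positivity
    have hfM₂nn : 0 ≤ f M₂ := hfnn _ hM₂pos.le
    -- upper bound on r
    have hrub : α * d + u ≤ M₂ := by
      have h1 : α * d ≤ α * D := mul_le_mul_of_nonneg_left hdD hα.le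
      rw [hM₂d]; nlinarith
    -- min of squares bounded by m²
    have hmins : min (α ^ 2 / 4) (min (1 / γ ^ 2) (α ^ 2 / (4 * γ ^ 2))) ≤ m ^ 2 := by
      rcases min_cases (α / 2) (min γ⁻¹ (α * γ⁻¹ / 2)) with ⟨h, _⟩ | ⟨h, _⟩
      · rw [hmm, h]
        exact (min_le_left _ _).trans_eq (by ring)
      · rw [hmm, h]
        rcases min_cases γ⁻¹ (α * γ⁻¹ / 2) with ⟨h2, _⟩ | ⟨h2, _⟩
        · rw [h2]
          refine ((min_le_right _ _).trans (min_le_left _ _)).trans_eq ?_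
          rw [inv_pow, one_div]
        · rw [h2]
          refine ((min_le_right _ _).trans (min_le_right _ _)).trans_eq ?_
          field_simp; ring
    -- lower bound on r: r ≥ (α/2) d + m s
    have hrl : α / 2 * d + m * s ≤ α * d + u := by
      set t := min 1 (α / 2) with htd
      have ht0 : 0 < t := lt_min one_pos (by positivity)
      have ht1 : t ≤ 1 := min_le_left _ _
      have htα : t ≤ α / 2 := min_le_right _ _
      have hmt : m ≤ t * γ⁻¹ := by
        rcases min_cases 1 (α / 2) with ⟨h, _⟩ | ⟨h, _⟩
        · rw [htd, h, one_mul]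
          exact (min_le_right _ _).trans (min_le_left _ _)
        · rw [htd, h]
          refine ((min_le_right _ _).trans (min_le_right _ _)).trans_eq (by ring)
      have hul : γ⁻¹ * s - d ≤ u := by linarith
      have e1 : t * (γ⁻¹ * s - d) ≤ t * u := mul_le_mul_of_nonneg_left hul ht0.le
      nlinarith [mul_nonneg (sub_nonneg.mpr ht1) hu0,
        mul_nonneg (sub_nonneg.mpr htα) hd0,
        mul_nonneg (sub_nonneg.mpr hmt) hs0]
    -- key arithmetic inequality
    have hbr : 2 * m * (α + 1 + 2 * γ⁻¹) ≤ (α + 1 + γ⁻¹) ^ 2 := by nlinarith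
    have hP : 2 * m * M₂ * D ≤ K2 := by
      rw [hM₂d, hK2d]; nlinarith [mul_le_mul_of_nonneg_right hbr (sq_nonneg D)]
    have hkey : m ^ 2 * (d ^ 2 + s ^ 2) * M₂ ≤ K2 * (α * d + u) := by
      have hd2 : d ^ 2 ≤ d * D := by nlinarith
      have hs2 : s ^ 2 ≤ 2 * D * s := by nlinarith
      have hsum : d ^ 2 + s ^ 2 ≤ d * D + 2 * D * s := add_le_add hd2 hs2
      have hmd : m / 2 * d ≤ α / 2 * d :=
        mul_le_mul_of_nonneg_right (by linarith) hd0
      have q1 : 0 ≤ m / 2 * d := by positivity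
      have q2 : 0 ≤ m * s := by positivity
      calc m ^ 2 * (d ^ 2 + s ^ 2) * M₂ = m ^ 2 * M₂ * (d ^ 2 + s ^ 2) := by ring
      _ ≤ m ^ 2 * M₂ * (d * D + 2 * D * s) := by
          exact mul_le_mul_of_nonneg_left hsum (by positivity)
      _ = m / 2 * d * (2 * m * M₂ * D) + m * s * (2 * m * M₂ * D) := by ring
      _ ≤ m / 2 * d * K2 + m * s * K2 :=
          add_le_add (mul_le_mul_of_nonneg_left hP q1) (mul_le_mul_of_nonneg_left hP q2)
      _ ≤ α / 2 * d * K2 + m * s * K2 :=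
          add_le_add_left (mul_le_mul_of_nonneg_right hmd hK2pos.le) _
      _ = (α / 2 * d + m * s) * K2 := by ring
      _ ≤ (α * d + u) * K2 := mul_le_mul_of_nonneg_right hrl hK2pos.le
      _ = K2 * (α * d + u) := mul_comm _ _
    -- concavity: r f(M₂) ≤ M₂ f(r)
    have hcc : (α * d + u) * f M₂ ≤ M₂ * f (α * d + u) := hconc' M₂ _ hM₂pos hr0 hrub
    -- derive: f M₂ * (m² (d²+s²)) ≤ K2 * f r
    have hA : f M₂ * (m ^ 2 * (d ^ 2 + s ^ 2)) ≤ K2 * f (α * d + u) := by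
      have h1 : f M₂ * (m ^ 2 * (d ^ 2 + s ^ 2) * M₂) ≤ f M₂ * (K2 * (α * d + u)) :=
        mul_le_mul_of_nonneg_left hkey hfM₂nn
      have h2 : K2 * ((α * d + u) * f M₂) ≤ K2 * (M₂ * f (α * d + u)) :=
        mul_le_mul_of_nonneg_left hcc hK2pos.le
      have h3 : f M₂ * (m ^ 2 * (d ^ 2 + s ^ 2)) * M₂ ≤ K2 * f (α * d + u) * M₂ := by
        linarith [h1, h2]
      exact le_of_mul_le_mul_right h3 hM₂pos
    -- conclude
    have hC2 : min (β / 2 * f (2 * min α 1 * γ⁻¹ * D))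
          (f M₂ / K2 * min (α ^ 2 / 4) (min (1 / γ ^ 2) (α ^ 2 / (4 * γ ^ 2)))) * K2
        ≤ f M₂ * m ^ 2 := by
      have h1 : min (β / 2 * f (2 * min α 1 * γ⁻¹ * D))
          (f M₂ / K2 * min (α ^ 2 / 4) (min (1 / γ ^ 2) (α ^ 2 / (4 * γ ^ 2))))
          ≤ f M₂ / K2 * min (α ^ 2 / 4) (min (1 / γ ^ 2) (α ^ 2 / (4 * γ ^ 2))) :=
        min_le_right _ _
      have h2 := mul_le_mul_of_nonneg_right h1 hK2pos.le
      have h3 : f M₂ / K2 * min (α ^ 2 / 4) (min (1 / γ ^ 2) (α ^ 2 / (4 * γ ^ 2))) * K2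
          = f M₂ * min (α ^ 2 / 4) (min (1 / γ ^ 2) (α ^ 2 / (4 * γ ^ 2))) := by
        field_simp
      have h4 : f M₂ * min (α ^ 2 / 4) (min (1 / γ ^ 2) (α ^ 2 / (4 * γ ^ 2)))
          ≤ f M₂ * m ^ 2 := mul_le_mul_of_nonneg_left hmins hfM₂nn
      linarith [h3 ▸ h2]
    have hfinal : min (β / 2 * f (2 * min α 1 * γ⁻¹ * D))
          (f M₂ / K2 * min (α ^ 2 / 4) (min (1 / γ ^ 2) (α ^ 2 / (4 * γ ^ 2))))
        * (d ^ 2 + s ^ 2) * K2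
        ≤ f (α * d + u) * (1 + β * s ^ 2) * K2 := by
      have hds2 : 0 ≤ d ^ 2 + s ^ 2 := by positivity
      have e1 := mul_le_mul_of_nonneg_right hC2 hds2
      have e3 : f (α * d + u) ≤ f (α * d + u) * (1 + β * s ^ 2) := by
        nlinarith [mul_nonneg hfrnn (mul_nonneg hβ.le (sq_nonneg s))]
      linarith [e1, hA, mul_le_mul_of_nonneg_left e3 hK2pos.le]
    exact le_of_mul_le_mul_right hfinal hK2pos
end

section
/- Define \(\varphi(s) = \exp(-\tfrac{A_1}{2A_2} s^2)\), \(\Phi(r) = \int_0^r \varphi(s)\,ds\), \(\psi(r) = 1 - \frac{A_0}{A_2}\int_0^r \Phi(s)\varphi(s)^{-1} ds\), and \(f(r) = \int_0^{\min\{r,R\}} \varphi(s)\psi(s)\,ds\), where \(A_0, A_1, A_2, R > 0\). Suppose \(\psi(r) \ge 1/2\) for all \(r \in [0,R]\). Then for all \(r \in [0,R]\): \(A_0 f(r) + A_1 r f'_-(r) + A_2 f''(r) \le 0\) (at points where \(f''\) exists, i.e. \(r \in (0,R)\)). -/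
/-- The designed concave function `f` satisfies the differential inequality
`A₀ f(r) + A₁ r f'(r) + A₂ f''(r) ≤ 0` on `(0, R)`, provided `ψ ≥ 1/2` on `[0, R]`. -/
theorem stmt12 (A0 A1 A2 R : ℝ) (hA0 : 0 < A0) (hA1 : 0 < A1) (hA2 : 0 < A2) (hR : 0 < R)
    (φ Φ ψ f : ℝ → ℝ)
    (hφ : ∀ s : ℝ, φ s = Real.exp (-(A1 / (2 * A2)) * s ^ 2))
    (hΦ : ∀ r : ℝ, Φ r = ∫ s in (0 : ℝ)..r, φ s)
    (hψ : ∀ r : ℝ, ψ r = 1 - (A0 / A2) * ∫ s in (0 : ℝ)..r, Φ s / φ s)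
    (hf : ∀ r : ℝ, f r = ∫ s in (0 : ℝ)..(min r R), φ s * ψ s)
    (hψhalf : ∀ r ∈ Set.Icc (0 : ℝ) R, (1 : ℝ) / 2 ≤ ψ r) :
    ∀ r ∈ Set.Ioo (0 : ℝ) R,
      A0 * f r + A1 * r * deriv f r + A2 * deriv (deriv f) r ≤ 0 := by
  -- basic continuity facts
  have hφc : Continuous φ := by
    have : φ = fun s => Real.exp (-(A1 / (2 * A2)) * s ^ 2) := funext hφ
    rw [this]; continuity
  have hφpos : ∀ s, 0 < φ s := fun s => by rw [hφ]; exact Real.exp_pos _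
  have hΦc : Continuous Φ := by
    have : Φ = fun r => ∫ s in (0:ℝ)..r, φ s := funext hΦ
    rw [this]
    exact intervalIntegral.continuous_primitive (fun a b => hφc.intervalIntegrable a b) 0
  have hgc : Continuous fun s => Φ s / φ s :=
    hΦc.div hφc fun s => (hφpos s).ne'
  have hψc : Continuous ψ := by
    have : ψ = fun r => 1 - (A0 / A2) * ∫ s in (0:ℝ)..r, Φ s / φ s := funext hψ
    rw [this]
    exact continuous_const.sub (continuous_const.mul
      (intervalIntegral.continuous_primitive (fun a b => hgc.intervalIntegrable a b) 0))
  have hφψc : Continuous fun s => φ s * ψ s := hφc.mul hψc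
  -- Φ nonneg on [0, ∞)
  have hΦnn : ∀ t : ℝ, 0 ≤ t → 0 ≤ Φ t := by
    intro t ht
    rw [hΦ]
    exact intervalIntegral.integral_nonneg ht fun s _ => (hφpos s).le
  -- ψ ≤ 1 on [0, ∞)
  have hψle : ∀ s : ℝ, 0 ≤ s → ψ s ≤ 1 := by
    intro s hs
    rw [hψ]
    have : 0 ≤ ∫ t in (0:ℝ)..s, Φ t / φ t := by
      refine intervalIntegral.integral_nonneg hs fun t ht => ?_
      exact div_nonneg (hΦnn t ht.1) (hφpos t).le
    nlinarith [div_pos hA0 hA2]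
  intro r hr
  obtain ⟨hr0, hrR⟩ := hr
  -- f = primitive of φψ near points of (0, R) (in fact everywhere below R)
  have hfeq : ∀ x < R, f x = ∫ s in (0:ℝ)..x, φ s * ψ s := by
    intro x hx
    rw [hf, min_eq_left hx.le]
  -- deriv f = φ ψ on (0, R)
  have hderf : ∀ x ∈ Set.Ioo (0:ℝ) R, deriv f x = φ x * ψ x := by
    intro x hx
    have hev : f =ᶠ[nhds x] fun y => ∫ s in (0:ℝ)..y, φ s * ψ s := by
      filter_upwards [eventually_lt_nhds hx.2] with y hy using hfeq y hy
    rw [Filter.EventuallyEq.deriv_eq hev]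
    exact Continuous.deriv_integral _ hφψc 0 x
  -- second derivative
  have hφd : HasDerivAt φ ((-(A1 / A2) * r) * φ r) r := by
    have h1 : HasDerivAt (fun s : ℝ => -(A1 / (2 * A2)) * s ^ 2)
        (-(A1 / (2 * A2)) * (2 * r)) r := by
      simpa using ((hasDerivAt_pow 2 r).const_mul (-(A1 / (2 * A2))))
    have h2 := h1.exp
    have : (fun s : ℝ => Real.exp (-(A1 / (2 * A2)) * s ^ 2)) = φ := funext fun s => (hφ s).symm
    rw [this] at h2
    convert h2 using 1
    rw [hφ]
    ring
  have hψd : HasDerivAt ψ (-(A0 / A2) * (Φ r / φ r)) r := by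
    have h1 : HasDerivAt (fun y => ∫ s in (0:ℝ)..y, Φ s / φ s) (Φ r / φ r) r :=
      (hgc.integral_hasStrictDerivAt 0 r).hasDerivAt
    have h2 := ((h1.const_mul (A0 / A2)).const_sub 1)
    have : (fun y => 1 - (A0 / A2) * ∫ s in (0:ℝ)..y, Φ s / φ s) = ψ :=
      funext fun y => (hψ y).symm
    rw [this] at h2
    convert h2 using 1
    rfl
    rfl
    ring
  have hder2 : deriv (deriv f) r
      = (-(A1 / A2) * r) * φ r * ψ r + φ r * (-(A0 / A2) * (Φ r / φ r)) := by
    have hev : deriv f =ᶠ[nhds r] fun x => φ x * ψ x := by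
      filter_upwards [Ioo_mem_nhds hr0 hrR] with x hx using hderf x hx
    rw [Filter.EventuallyEq.deriv_eq hev]
    exact (hφd.mul hψd).deriv
  -- f r ≤ Φ r
  have hfle : f r ≤ Φ r := by
    rw [hfeq r hrR, hΦ]
    refine intervalIntegral.integral_mono_on hr0.le
      (hφψc.intervalIntegrable 0 r) (hφc.intervalIntegrable 0 r) fun s hs => ?_
    nlinarith [hφpos s, hψle s hs.1]
  rw [hderf r ⟨hr0, hrR⟩, hder2]
  have hφr := hφpos r
  have h := mul_le_mul_of_nonneg_left hfle hA0.le
  have hA2ne : (A2 : ℝ) ≠ 0 := hA2.ne'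
  have hφne : φ r ≠ 0 := hφr.ne'
  have key : A0 * f r + A1 * r * (φ r * ψ r)
      + A2 * (-(A1 / A2) * r * φ r * ψ r + φ r * (-(A0 / A2) * (Φ r / φ r)))
      = A0 * (f r - Φ r) := by
    field_simp
    ring
  rw [key]
  nlinarith
end

section
/- Define \(\varphi(r) = e^{-Lr^2/8}\) and \(\Phi(r) = \int_0^r \varphi(s)\,ds\) for \(L, R > 0\). Then \(\inf_{r \in (0,R]} \frac{r\varphi(r)}{\Phi(r)} \ge \min\left\{ e^{-1/2},\ \frac{R\, e^{-LR^2/8}}{\sqrt{2\pi/L}} \right\}\). -/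
lemma aux_deriv (L : ℝ) (x : ℝ) :
    HasDerivAt (fun x : ℝ => x * Real.exp (-(L * x ^ 2 / 8)))
      (Real.exp (-(L * x ^ 2 / 8)) * (1 - L * x ^ 2 / 4)) x := by
  have h1 : HasDerivAt (fun x : ℝ => -(L * x ^ 2 / 8)) (-(L * x / 4)) x := by
    have := (((hasDerivAt_pow 2 x).const_mul L).div_const 8).neg
    refine this.congr_deriv ?_
    norm_num
    ring
  have h2 := h1.exp
  have h3 := (hasDerivAt_id x).mul h2
  refine h3.congr_deriv ?_
  simp only [id_eq]
  ring

lemma aux_anti (L : ℝ) (hL : 0 < L) :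
    AntitoneOn (fun x : ℝ => x * Real.exp (-(L * x ^ 2 / 8)))
      (Set.Ici (2 / Real.sqrt L)) := by
  have hs : (0:ℝ) < Real.sqrt L := Real.sqrt_pos.mpr hL
  apply antitoneOn_of_deriv_nonpos (convex_Ici _)
  · exact (continuous_id.mul (Real.continuous_exp.comp (by continuity))).continuousOn
  · intro x hx
    exact (aux_deriv L x).differentiableAt.differentiableWithinAt
  · intro x hx
    rw [(aux_deriv L x).deriv]
    rw [interior_Ici] at hx
    have hx2 : 2 / Real.sqrt L < x := hx
    have hxpos : 0 < x := lt_trans (by positivity) hx2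
    have h4 : 4 / L < x ^ 2 := by
      have := mul_self_lt_mul_self (by positivity) hx2
      calc 4 / L = (2 / Real.sqrt L) * (2 / Real.sqrt L) := by
            rw [div_mul_div_comm, Real.mul_self_sqrt hL.le]; norm_num
        _ < x * x := this
        _ = x ^ 2 := (sq x).symm
    have : 1 ≤ L * x ^ 2 / 4 := by
      rw [div_lt_iff₀ hL, mul_comm] at h4
      linarith
    have := Real.exp_pos (-(L * x ^ 2 / 8))
    nlinarith

/-- Lower bound for `r φ(r) / Φ(r)` with `φ(r) = e^{-Lr²/8}`, `Φ(r) = ∫₀ʳ φ`: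
on `(0, R]` it is at least `min{e^{-1/2}, R e^{-LR²/8} / √(2π/L)}`. -/
theorem stmt14 (L R : ℝ) (hL : 0 < L) (hR : 0 < R)
    (φ Φ : ℝ → ℝ)
    (hφ : ∀ r : ℝ, φ r = Real.exp (-(L * r ^ 2 / 8)))
    (hΦ : ∀ r : ℝ, Φ r = ∫ s in (0 : ℝ)..r, φ s) :
    ∀ r : ℝ, 0 < r → r ≤ R →
      min (Real.exp (-(1 / 2 : ℝ)))
          (R * Real.exp (-(L * R ^ 2 / 8)) / Real.sqrt (2 * Real.pi / L))
        ≤ r * φ r / Φ r := by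
  intro r hr hrR
  have hφc : Continuous φ := by
    have : φ = fun r => Real.exp (-(L * r ^ 2 / 8)) := funext hφ
    rw [this]; continuity
  have hφpos : ∀ s, 0 < φ s := fun s => by rw [hφ]; exact Real.exp_pos _
  -- Φ r > 0
  have hΦpos : 0 < Φ r := by
    rw [hΦ]
    apply intervalIntegral.intervalIntegral_pos_of_pos_on
      (hφc.intervalIntegrable 0 r) (fun x _ => hφpos x) hr
  -- Φ r ≤ r
  have hΦler : Φ r ≤ r := by
    rw [hΦ]
    calc (∫ s in (0:ℝ)..r, φ s) ≤ ∫ s in (0:ℝ)..r, 1 := by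
          apply intervalIntegral.integral_mono_on hr.le (hφc.intervalIntegrable 0 r)
            (intervalIntegrable_const)
          intro x _
          rw [hφ]
          exact Real.exp_le_one_iff.mpr (neg_nonpos.mpr (by positivity))
      _ = r := by simp
  -- Φ r ≤ √(2π/L)
  have hgauss : MeasureTheory.Integrable (fun s : ℝ => Real.exp (-(L/8) * s ^ 2)) :=
    integrable_exp_neg_mul_sq (by positivity)
  have hΦle : Φ r ≤ Real.sqrt (2 * Real.pi / L) := by
    rw [hΦ]
    have h1 : (∫ s in (0:ℝ)..r, φ s) = ∫ s in Set.Ioc (0:ℝ) r, Real.exp (-(L/8) * s ^ 2) := by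
      rw [intervalIntegral.integral_of_le hr.le]
      apply MeasureTheory.setIntegral_congr_fun measurableSet_Ioc
      intro x _
      rw [hφ]
      ring_nf
    rw [h1]
    have h2 : (∫ s in Set.Ioc (0:ℝ) r, Real.exp (-(L/8) * s ^ 2))
        ≤ ∫ s in Set.Ioi (0:ℝ), Real.exp (-(L/8) * s ^ 2) := by
      apply MeasureTheory.setIntegral_mono_set hgauss.integrableOn
        (MeasureTheory.ae_of_all _ fun x => (Real.exp_pos _).le)
      exact MeasureTheory.ae_of_all _ (Set.Ioc_subset_Ioi_self)
    have h3 : (∫ s in Set.Ioi (0:ℝ), Real.exp (-(L/8) * s ^ 2))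
        = Real.sqrt (Real.pi / (L/8)) / 2 := integral_gaussian_Ioi (L/8)
    have h4 : Real.sqrt (Real.pi / (L/8)) / 2 = Real.sqrt (2 * Real.pi / L) := by
      have he : Real.pi / (L / 8) = 2 ^ 2 * (2 * Real.pi / L) := by
        field_simp; ring
      rw [he, Real.sqrt_mul (by positivity), Real.sqrt_sq (by norm_num)]
      ring
    refine h2.trans ?_
    rw [h3]
    exact le_of_eq h4
  set m := min (Real.exp (-(1 / 2 : ℝ)))
      (R * Real.exp (-(L * R ^ 2 / 8)) / Real.sqrt (2 * Real.pi / L)) with hm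
  rw [le_div_iff₀ hΦpos]
  have hsqrtpos : 0 < Real.sqrt (2 * Real.pi / L) := Real.sqrt_pos.mpr (by positivity)
  have hmpos : 0 < m := lt_min (Real.exp_pos _) (by positivity)
  rcases le_total r (2 / Real.sqrt L) with hc | hc
  · -- small r case
    have hexp : Real.exp (-(1/2 : ℝ)) ≤ φ r := by
      rw [hφ]
      apply Real.exp_le_exp.mpr
      have hs : (0:ℝ) < Real.sqrt L := Real.sqrt_pos.mpr hL
      have : r ^ 2 ≤ 4 / L := by
        have := mul_self_le_mul_self hr.le hc
        calc r ^ 2 = r * r := sq r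
          _ ≤ (2 / Real.sqrt L) * (2 / Real.sqrt L) := this
          _ = 4 / L := by rw [div_mul_div_comm, Real.mul_self_sqrt hL.le]; norm_num
      have : L * r ^ 2 ≤ 4 := by
        rw [le_div_iff₀ hL, mul_comm] at this
        linarith
      linarith
    calc m * Φ r ≤ Real.exp (-(1/2:ℝ)) * r := by
          apply mul_le_mul (min_le_left _ _) hΦler hΦpos.le (Real.exp_pos _).le
      _ ≤ φ r * r := by nlinarith [hφpos r]
      _ = r * φ r := mul_comm _ _
  · -- large r case
    have hanti := aux_anti L hL hc (le_trans hc hrR) hrR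
    have hRr : R * Real.exp (-(L * R ^ 2 / 8)) ≤ r * Real.exp (-(L * r ^ 2 / 8)) := hanti
    calc m * Φ r ≤ (R * Real.exp (-(L * R ^ 2 / 8)) / Real.sqrt (2 * Real.pi / L))
            * Real.sqrt (2 * Real.pi / L) := by
          apply mul_le_mul (min_le_right _ _) hΦle hΦpos.le (by positivity)
      _ = R * Real.exp (-(L * R ^ 2 / 8)) := div_mul_cancel₀ _ hsqrtpos.ne'
      _ ≤ r * Real.exp (-(L * r ^ 2 / 8)) := hRr
      _ = r * φ r := by rw [hφ]
end
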